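/- Let M be a loopless matroid on a finite ground set E with |E| = n and rank function r. Let ∅ = F_0 ⊊ F_1 ⊊ ⋯ ⊊ F_k = E be a chain of subsets, set E_i = F_i \ F_{i−1} and r_i = r(F_i) − r(F_{i−1}), and assume r_i ≥ 1 for all i and that the densities λ_i = |E_i| / r_i satisfy λ_1 > λ_2 > ⋯ > λ_k ≥ 1 (as holds for the principal sequence of M). Let w_1 ≥ w_2 ≥ ⋯ ≥ w_n ≥ 0 be real weights. Then the average over all bijections σ : {1,…,n} → E (with element σ(j) receiving weight w_j) of the maximum weight of a set I ⊆ E satisfying |I ∩ E_i| ≤ r_i for all i, is at least (1 − 1/e) times the average over all bijections σ of the maximum weight of an independent set of M. -/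

import Mathlib

/-- A matroid on a finite ground set `E`, given by its rank function `r`,
where `r X` is the size of a largest independent subset of `X`. -/
structure FinMatroid (α : Type*) [DecidableEq α] where
  E : Finset α
  r : Finset α → ℕ
  r_empty : r ∅ = 0
  r_le_card : ∀ X : Finset α, r X ≤ X.card
  r_mono : ∀ ⦃X Y : Finset α⦄, X ⊆ Y → r X ≤ r Y
  r_submod : ∀ X Y : Finset α, r (X ∪ Y) + r (X ∩ Y) ≤ r X + r Y

/-- A matroid is loopless if every singleton of the ground set is independent. -/
def FinMatroid.Loopless {α : Type*} [DecidableEq α] (M : FinMatroid α) : Prop :=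
  ∀ e ∈ M.E, M.r {e} = 1

/-!
Abel summation writes the weight of a set `I` under `σ` as
`∑ₜ (w t - w (t + 1)) * #(I ∩ Sₜ₊₁)` (with `w n = 0`), where `Sₘ = σ {0, …, m - 1}` carries the
`m` largest weights. An independent set meets `Sₘ` in at most `r Sₘ` elements, while keeping the
`rᵢ` earliest elements of every block `Eᵢ` gives a partition-feasible set meeting every `Sₘ` in
exactly `ρ Sₘ = ∑ᵢ min #(Sₘ ∩ Eᵢ) rᵢ` elements. For uniform `σ`, `Sₘ` is a uniform `m`-subset,
so it suffices that `𝔼 ρ S ≥ (1 - 1/e) 𝔼 r S` for a uniform `m`-subset `S`. As the densities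
decrease, the blocks with `rᵢ ≤ 𝔼 #(S ∩ Eᵢ)` come first, and `r S ≤ r Fᵢ + #(S \ Fᵢ)` at the
switching index gives `𝔼 r S ≤ ∑ᵢ min (𝔼 #(S ∩ Eᵢ)) rᵢ`. Finally
`𝔼 min #(S ∩ A) r ≥ (1 - 1/e) min (𝔼 #(S ∩ A)) r` follows from `min c r ≥ r (1 - (1 - 1/r) ^ c)`
and a comparison of the hypergeometric `𝔼 q ^ #(S ∩ A)` with its binomial counterpart.
-/

open Finset Real

section Weights

variable {n : ℕ} {w : ℕ → ℝ}

noncomputable def weightDrop (n : ℕ) (w : ℕ → ℝ) (t : ℕ) : ℝ :=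
  (if t < n then w t else 0) - (if t + 1 < n then w (t + 1) else 0)

lemma weightDrop_nonneg (hw : ∀ i j, i ≤ j → j < n → w j ≤ w i) (hw0 : ∀ j < n, 0 ≤ w j)
    (t : ℕ) : 0 ≤ weightDrop n w t := by
  unfold weightDrop
  split_ifs with h₁ h₂ h₂
  · linarith [hw t (t + 1) t.le_succ h₂]
  · linarith [hw0 t h₁]
  · omega
  · simp

lemma sum_range_weightDrop (N : ℕ) :
    ∑ t ∈ range N, weightDrop n w t = (if 0 < n then w 0 else 0) - (if N < n then w N else 0) :=
  sum_range_sub' (fun t => if t < n then w t else 0) N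

lemma sum_Ico_weightDrop {j : ℕ} (hj : j < n) : ∑ t ∈ Ico j n, weightDrop n w t = w j := by
  rw [sum_Ico_eq_sub _ hj.le, sum_range_weightDrop, sum_range_weightDrop]
  simp [hj]

lemma sum_weight_eq_sum_weightDrop_mul_card (A : Finset (Fin n)) :
    ∑ j ∈ A, w j =
      ∑ t ∈ range n, weightDrop n w t * #(A.filter fun j : Fin n => (j : ℕ) < t + 1) := by
  calc ∑ j ∈ A, w j = ∑ j ∈ A, ∑ t ∈ range n, if (j : ℕ) ≤ t then weightDrop n w t else 0 := by
        refine sum_congr rfl fun j _ => ?_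
        rw [← sum_Ico_weightDrop (w := w) j.2, ← sum_filter]
        congr 1
        ext t
        simp [and_comm]
    _ = _ := by
        rw [sum_comm]
        refine sum_congr rfl fun t _ => ?_
        simp only [← sum_filter, sum_const, nsmul_eq_mul, mul_comm, Nat.lt_succ_iff]

lemma mul_sum_sum_mul_le_of_forall {ι κ : Type*} {s : Finset ι} {T : Finset κ} {a : ℝ}
    {d : κ → ℝ} {f g : ι → κ → ℝ} (hd : ∀ t ∈ T, 0 ≤ d t)
    (h : ∀ t ∈ T, a * ∑ i ∈ s, f i t ≤ ∑ i ∈ s, g i t) :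
    a * ∑ i ∈ s, ∑ t ∈ T, d t * f i t ≤ ∑ i ∈ s, ∑ t ∈ T, d t * g i t := by
  rw [sum_comm, sum_comm (s := s), mul_sum]
  refine sum_le_sum fun t ht => ?_
  rw [← mul_sum, ← mul_sum, mul_left_comm]
  exact mul_le_mul_of_nonneg_left (h t ht) (hd t ht)

end Weights

section Greedy

variable {β γ : Type*} [DecidableEq β]

lemma exists_subset_card_filter_lt_eq_min [LinearOrder γ] (f : β → γ) (P : Finset β) (r : ℕ) :
    ∃ T ⊆ P, #T ≤ r ∧ ∀ c, #(T.filter (f · < c)) = min #(P.filter (f · < c)) r := by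
  induction P using Finset.strongInduction with
  | _ P ih =>
    rcases le_or_gt #P r with hP | hP
    · exact ⟨P, subset_rfl, hP, fun c => (min_eq_left ((card_filter_le _ _).trans hP)).symm⟩
    obtain ⟨x, hxP, hxmax⟩ := P.exists_max_image f (card_pos.1 (by omega))
    obtain ⟨T, hTP, hTr, hT⟩ := ih (P.erase x) (erase_ssubset hxP)
    refine ⟨T, hTP.trans (erase_subset _ _), hTr, fun c => ?_⟩
    rw [hT c, filter_erase]
    by_cases hxc : f x < c
    · have hall : P.filter (f · < c) = P := filter_true_of_mem fun y hy => (hxmax y hy).trans_lt hxc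
      rw [hall, card_erase_of_mem hxP]
      omega
    · rw [erase_eq_of_notMem (by simp [hxc])]

end Greedy

section Prefix

variable {β : Type*} [DecidableEq β] {n : ℕ}

def prefixImage (v : Fin n → β) (m : ℕ) : Finset β :=
  (univ.filter fun j : Fin n => (j : ℕ) < m).image v

def partitionRank (B : ℕ → Finset β) (r : ℕ → ℕ) (k : ℕ) (S : Finset β) : ℕ :=
  ∑ j ∈ range k, min #(S ∩ B j) (r j)

lemma card_prefixImage {v : Fin n → β} (hv : Function.Injective v) {m : ℕ} (hm : m ≤ n) :
    #(prefixImage v m) = m := by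
  rw [prefixImage, card_image_of_injective _ hv, Fin.card_filter_val_lt, min_eq_right hm]

lemma card_filter_lt_eq_card_inter_prefixImage {v : Fin n → β} (hv : Function.Injective v)
    (I : Finset β) (m : ℕ) :
    #((univ.filter fun j => v j ∈ I).filter fun j : Fin n => (j : ℕ) < m) =
      #(I ∩ prefixImage v m) := by
  rw [← card_image_of_injective _ hv]
  congr 1
  ext x
  simp only [prefixImage, mem_image, mem_filter, mem_univ, true_and, mem_inter]
  constructor
  · rintro ⟨j, ⟨hjI, hjm⟩, rfl⟩
    exact ⟨hjI, j, hjm, rfl⟩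
  · rintro ⟨hxI, j, hjm, rfl⟩
    exact ⟨j, ⟨hxI, hjm⟩, rfl⟩

lemma filter_mem_image_eq {v : Fin n → β} (hv : Function.Injective v) (U : Finset (Fin n)) :
    (univ.filter fun j => v j ∈ U.image v) = U := by
  ext j
  simp [hv.eq_iff]

lemma exists_card_filter_lt_eq_partitionRank {v : Fin n → β} (hv : Function.Injective v)
    {B : ℕ → Finset β} {k : ℕ} (hB : (range k : Set ℕ).PairwiseDisjoint B) (r : ℕ → ℕ) :
    ∃ U : Finset (Fin n), (∀ j < k, #(U.image v ∩ B j) ≤ r j) ∧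
      ∀ m, #(U.filter fun j : Fin n => (j : ℕ) < m) = partitionRank B r k (prefixImage v m) := by
  set P : ℕ → Finset (Fin n) := fun j => univ.filter fun u => v u ∈ B j
  -- In each block keep its `r j` earliest positions.
  choose T hTP hTr hT using fun j =>
    exists_subset_card_filter_lt_eq_min (fun u : Fin n => (u : ℕ)) (P j) (r j)
  have hvT : ∀ {j u}, u ∈ T j → v u ∈ B j := fun hu => (mem_filter.1 (hTP _ hu)).2
  have hTdisj : (range k : Set ℕ).PairwiseDisjoint T := fun i hi j hj hij =>
    disjoint_left.2 fun u hui huj => disjoint_left.1 (hB hi hj hij) (hvT hui) (hvT huj)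
  refine ⟨(range k).biUnion T, fun j hj => ?_, fun m => ?_⟩
  · calc #(((range k).biUnion T).image v ∩ B j) ≤ #((T j).image v) := by
          refine card_le_card fun x hx => ?_
          obtain ⟨hxU, hxB⟩ := mem_inter.1 hx
          obtain ⟨u, hu, rfl⟩ := mem_image.1 hxU
          obtain ⟨i, hi, hui⟩ := mem_biUnion.1 hu
          obtain rfl : i = j := by
            by_contra hij
            exact disjoint_left.1 (hB hi (mem_range.2 hj) hij) (hvT hui) hxB
          exact mem_image_of_mem v hui
      _ ≤ r j := card_image_le.trans (hTr j)
  · rw [filter_biUnion, card_biUnion fun i hi j hj hij =>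
      disjoint_filter_filter (hTdisj hi hj hij), partitionRank]
    refine sum_congr rfl fun j _ => ?_
    rw [hT, card_filter_lt_eq_card_inter_prefixImage hv, inter_comm]

end Prefix

namespace FinMatroid

variable {α : Type*} [DecidableEq α] (M : FinMatroid α)

lemma r_le_r_add_card_sdiff (S B : Finset α) : M.r S ≤ M.r B + #(S \ B) :=
  calc M.r S ≤ M.r (B ∪ (S \ B)) :=
        M.r_mono (by rw [union_sdiff_self_eq_union]; exact subset_union_right)
    _ ≤ M.r B + M.r (S \ B) := (Nat.le_add_right _ _).trans (M.r_submod _ _)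
    _ ≤ M.r B + #(S \ B) := Nat.add_le_add_left (M.r_le_card _) _

lemma r_eq_card_of_subset {I J : Finset α} (hI : M.r I = #I) (hJI : J ⊆ I) : M.r J = #J := by
  have h := M.r_le_r_add_card_sdiff I J
  rw [hI, card_sdiff_of_subset hJI] at h
  have := card_le_card hJI
  have := M.r_le_card J
  omega

lemma card_inter_le_r {I : Finset α} (hI : M.r I = #I) (X : Finset α) : #(I ∩ X) ≤ M.r X :=
  (M.r_eq_card_of_subset hI inter_subset_left).symm.le.trans (M.r_mono inter_subset_right)

end FinMatroid

section WeightedPrefixes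

variable {β : Type*} [DecidableEq β] {n : ℕ} {w : ℕ → ℝ} {v : Fin n → β}

lemma sum_weight_filter_mem_eq (hv : Function.Injective v) (I : Finset β) :
    ∑ j ∈ univ.filter (fun j => v j ∈ I), w j =
      ∑ t ∈ range n, weightDrop n w t * #(I ∩ prefixImage v (t + 1)) := by
  simp only [sum_weight_eq_sum_weightDrop_mul_card, card_filter_lt_eq_card_inter_prefixImage hv]

lemma FinMatroid.sum_weight_le_of_indep (M : FinMatroid β) (hv : Function.Injective v)
    (hw : ∀ t ∈ range n, 0 ≤ weightDrop n w t) {I : Finset β} (hI : M.r I = #I) :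
    ∑ j ∈ univ.filter (fun j => v j ∈ I), w j ≤
      ∑ t ∈ range n, weightDrop n w t * M.r (prefixImage v (t + 1)) := by
  rw [sum_weight_filter_mem_eq hv]
  exact sum_le_sum fun t ht => mul_le_mul_of_nonneg_left
    (by exact_mod_cast M.card_inter_le_r hI _) (hw t ht)

lemma exists_sum_weight_eq_sum_partitionRank (hv : Function.Injective v) {B : ℕ → Finset β}
    {k : ℕ} (hB : (range k : Set ℕ).PairwiseDisjoint B) (r : ℕ → ℕ) :
    ∃ I ⊆ univ.image v, (∀ j < k, #(I ∩ B j) ≤ r j) ∧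
      ∑ j ∈ univ.filter (fun j => v j ∈ I), w j =
        ∑ t ∈ range n, weightDrop n w t * partitionRank B r k (prefixImage v (t + 1)) := by
  obtain ⟨U, hUcap, hU⟩ := exists_card_filter_lt_eq_partitionRank hv hB r
  refine ⟨U.image v, image_subset_image (subset_univ U), hUcap, ?_⟩
  rw [filter_mem_image_eq hv, sum_weight_eq_sum_weightDrop_mul_card]
  simp only [hU]

end WeightedPrefixes

lemma one_sub_inv_exp_one_nonneg : 0 ≤ 1 - (exp 1)⁻¹ :=
  sub_nonneg.2 (inv_le_one_of_one_le₀ (one_le_exp zero_le_one))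

lemma one_sub_inv_exp_mul_min_le {μ r : ℝ} (hμ : 0 ≤ μ) (hr : 0 < r) :
    (1 - (exp 1)⁻¹) * min μ r ≤ r * (1 - exp (-(μ / r))) := by
  rw [← exp_neg]
  rcases le_total μ r with h | h
  · have hx0 : 0 ≤ μ / r := div_nonneg hμ hr.le
    have hx1 : μ / r ≤ 1 := (div_le_one hr).2 h
    have hconv := convexOn_exp.2 (Set.mem_univ 0) (Set.mem_univ (-1)) (sub_nonneg.2 hx1) hx0
      (by ring)
    simp only [smul_eq_mul, mul_zero, zero_add, exp_zero, mul_neg, mul_one] at hconv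
    rw [min_eq_left h]
    calc (1 - exp (-1)) * μ = r * (μ / r * (1 - exp (-1))) := by field_simp
      _ ≤ r * (1 - exp (-(μ / r))) := by gcongr; linarith
  · have : exp (-(μ / r)) ≤ exp (-1) :=
      exp_le_exp.2 (neg_le_neg ((one_le_div hr).2 h))
    rw [min_eq_right h]
    nlinarith

lemma mul_one_sub_pow_le_min {r : ℕ} (hr : 1 ≤ r) (c : ℕ) :
    (r : ℝ) * (1 - (1 - (r : ℝ)⁻¹) ^ c) ≤ min (c : ℝ) r := by
  have hr0 : (0 : ℝ) < r := by exact_mod_cast hr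
  have hinv : (r : ℝ)⁻¹ ≤ 1 := inv_le_one_of_one_le₀ (by exact_mod_cast hr)
  have hpow : 0 ≤ (1 - (r : ℝ)⁻¹) ^ c := pow_nonneg (sub_nonneg.2 hinv) c
  refine le_min ?_ (by nlinarith)
  have hbern := mul_le_mul_of_nonneg_left
    (one_add_mul_le_pow (a := -(r : ℝ)⁻¹) (by linarith) c) hr0.le
  rw [← sub_eq_add_neg, show (r : ℝ) * (1 + c * -(r : ℝ)⁻¹) = r - c by field_simp; ring]
    at hbern
  linarith

section RandomSubset

variable {α : Type*} [DecidableEq α] {E A : Finset α} {m : ℕ}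

lemma sum_powersetCard_succ_of_mem {M : Type*} [AddCommMonoid M] (f : Finset α → M) {x : α}
    (hx : x ∈ E) (m : ℕ) :
    ∑ S ∈ E.powersetCard (m + 1), f S =
      ∑ S ∈ (E.erase x).powersetCard (m + 1), f S +
        ∑ S ∈ (E.erase x).powersetCard m, f (insert x S) := by
  have hxS : ∀ S ∈ (E.erase x).powersetCard m, x ∉ S := fun S hS hxS =>
    notMem_erase x E ((mem_powersetCard.1 hS).1 hxS)
  conv_lhs => rw [← insert_erase hx, powersetCard_succ_insert (notMem_erase x E)]
  rw [sum_union, sum_image]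
  · intro S hS T hT hST
    rw [← erase_insert (hxS S hS), hST, erase_insert (hxS T hT)]
  · refine disjoint_left.2 fun S hS hS' => ?_
    obtain ⟨T, -, rfl⟩ := mem_image.1 hS'
    exact notMem_erase x E ((mem_powersetCard.1 hS).1 (mem_insert_self x T))

lemma sum_powersetCard_succ_sum_mem {M : Type*} [AddCommMonoid M] (g : Finset α → α → M) :
    ∑ S ∈ E.powersetCard (m + 1), ∑ x ∈ S, g S x =
      ∑ T ∈ E.powersetCard m, ∑ x ∈ E \ T, g (insert x T) x := by
  rw [sum_sigma', sum_sigma']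
  refine sum_nbij' (fun p => ⟨p.1.erase p.2, p.2⟩) (fun p => ⟨insert p.2 p.1, p.2⟩)
    ?_ ?_ ?_ ?_ ?_
  · rintro ⟨S, x⟩ h
    simp only [mem_sigma, mem_powersetCard, mem_sdiff] at h ⊢
    exact ⟨⟨(erase_subset x S).trans h.1.1, by rw [card_erase_of_mem h.2, h.1.2]; rfl⟩,
      h.1.1 h.2, notMem_erase x S⟩
  · rintro ⟨T, x⟩ h
    simp only [mem_sigma, mem_powersetCard, mem_sdiff] at h ⊢
    exact ⟨⟨insert_subset h.2.1 h.1.1, by rw [card_insert_of_notMem h.2.2, h.1.2]⟩,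
      mem_insert_self x T⟩
  · rintro ⟨S, x⟩ h
    simp only [mem_sigma] at h
    simp [insert_erase h.2]
  · rintro ⟨T, x⟩ h
    simp only [mem_sigma, mem_sdiff] at h
    simp [erase_insert h.2.2]
  · rintro ⟨S, x⟩ h
    simp only [mem_sigma] at h
    simp [insert_erase h.2]

lemma succ_mul_sum_powersetCard_succ_le {f : Finset α → ℝ} (hf : ∀ S x, f (insert x S) ≤ f S) :
    ((m + 1 : ℕ) : ℝ) * ∑ S ∈ E.powersetCard (m + 1), f S ≤
      ((#E - m : ℕ) : ℝ) * ∑ T ∈ E.powersetCard m, f T := by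
  calc ((m + 1 : ℕ) : ℝ) * ∑ S ∈ E.powersetCard (m + 1), f S
        = ∑ S ∈ E.powersetCard (m + 1), ∑ _x ∈ S, f S := by
          rw [mul_sum]
          refine sum_congr rfl fun S hS => ?_
          rw [sum_const, (mem_powersetCard.1 hS).2, nsmul_eq_mul]
    _ = ∑ T ∈ E.powersetCard m, ∑ x ∈ E \ T, f (insert x T) :=
          sum_powersetCard_succ_sum_mem fun S _ => f S
    _ ≤ ∑ T ∈ E.powersetCard m, ∑ _x ∈ E \ T, f T :=
          sum_le_sum fun T _ => sum_le_sum fun x _ => hf T x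
    _ = ((#E - m : ℕ) : ℝ) * ∑ T ∈ E.powersetCard m, f T := by
          rw [mul_sum]
          refine sum_congr rfl fun T hT => ?_
          obtain ⟨hTE, hTm⟩ := mem_powersetCard.1 hT
          rw [sum_const, card_sdiff_of_subset hTE, hTm, nsmul_eq_mul]

noncomputable def interPowSum (q : ℝ) (E A : Finset α) (m : ℕ) : ℝ :=
  ∑ S ∈ E.powersetCard m, q ^ #(S ∩ A)

lemma interPowSum_succ_of_notMem (q : ℝ) {x : α} (hxE : x ∈ E) (hxA : x ∉ A) (m : ℕ) :
    interPowSum q E A (m + 1) =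
      interPowSum q (E.erase x) A (m + 1) + interPowSum q (E.erase x) A m := by
  simp only [interPowSum, sum_powersetCard_succ_of_mem _ hxE, insert_inter_of_notMem hxA]

lemma interPowSum_insert_succ (q : ℝ) {x : α} (hxE : x ∈ E) (m : ℕ) :
    interPowSum q E (insert x A) (m + 1) =
      interPowSum q (E.erase x) A (m + 1) + q * interPowSum q (E.erase x) A m := by
  have hxS : ∀ {m}, ∀ S ∈ (E.erase x).powersetCard m, x ∉ S := fun S hS hxS =>
    notMem_erase x E ((mem_powersetCard.1 hS).1 hxS)
  rw [interPowSum, sum_powersetCard_succ_of_mem _ hxE, interPowSum, interPowSum, mul_sum]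
  congr 1
  · exact sum_congr rfl fun S hS => by rw [inter_insert_of_notMem (hxS S hS)]
  · refine sum_congr rfl fun S hS => ?_
    rw [← insert_inter_distrib, card_insert_of_notMem fun h => hxS S hS (mem_inter.1 h).1,
      pow_succ']

lemma succ_mul_interPowSum_succ_le {q : ℝ} (hq0 : 0 ≤ q) (hq1 : q ≤ 1) {x : α} (hxE : x ∈ E)
    (hxA : x ∉ A) (hm : m + 1 ≤ #E) :
    ((m + 1 : ℕ) : ℝ) * interPowSum q E A (m + 1) ≤ #E * interPowSum q (E.erase x) A m := by
  have hmono := succ_mul_sum_powersetCard_succ_le (E := E.erase x) (m := m)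
    (f := fun S => q ^ #(S ∩ A)) fun S y =>
      pow_le_pow_of_le_one hq0 hq1 (card_le_card (inter_subset_inter (subset_insert y S) le_rfl))
  have hcard : ((#(E.erase x) - m : ℕ) : ℝ) + ((m + 1 : ℕ) : ℝ) = #E := by
    rw [card_erase_of_mem hxE]
    norm_cast
    omega
  rw [interPowSum_succ_of_notMem q hxE hxA, mul_add, ← hcard, add_mul]
  exact add_le_add_left hmono _

lemma card_mul_interPowSum_insert_le {q : ℝ} (hq0 : 0 ≤ q) (hq1 : q ≤ 1) {x : α}
    (hxE : x ∈ E) (hxA : x ∉ A) (hm : m + 1 ≤ #E) :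
    #E * interPowSum q E (insert x A) (m + 1) ≤
      (#E - (1 - q) * (m + 1 : ℕ)) * interPowSum q E A (m + 1) := by
  have hsplit : interPowSum q E (insert x A) (m + 1) =
      interPowSum q E A (m + 1) - (1 - q) * interPowSum q (E.erase x) A m := by
    rw [interPowSum_insert_succ q hxE, interPowSum_succ_of_notMem q hxE hxA]
    ring
  have := mul_le_mul_of_nonneg_left (succ_mul_interPowSum_succ_le hq0 hq1 hxE hxA hm)
    (sub_nonneg.2 hq1)
  rw [hsplit]
  nlinarith

/-- Divided by `(#E).choose m`, the left side is `𝔼 q ^ #(S ∩ A)` for a uniformly random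
`m`-subset `S` of `E`; the bound is its value when the elements of `E` are sampled
independently with probability `m / #E`. -/
lemma interPowSum_le {q : ℝ} (hq0 : 0 ≤ q) (hq1 : q ≤ 1) (hm : m ≤ #E) (hA : A ⊆ E) :
    interPowSum q E A m ≤ (#E).choose m * (1 - (1 - q) * m / #E) ^ #A := by
  induction A using Finset.induction_on with
  | empty => simp [interPowSum, card_powersetCard]
  | @insert x A hxA ih =>
    obtain ⟨hxE, hAE⟩ := insert_subset_iff.1 hA
    have hE : (0 : ℝ) < #E := by exact_mod_cast card_pos.2 ⟨x, hxE⟩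
    obtain _ | m := m
    · simp [interPowSum]
    have hfac : 0 ≤ 1 - (1 - q) * ((m + 1 : ℕ) : ℝ) / #E := by
      rw [sub_nonneg, div_le_one hE]
      have : ((m + 1 : ℕ) : ℝ) ≤ #E := by exact_mod_cast hm
      nlinarith
    have hstep := card_mul_interPowSum_insert_le hq0 hq1 hxE hxA hm
    rw [card_insert_of_notMem hxA, pow_succ]
    refine le_of_mul_le_mul_left ?_ hE
    calc #E * interPowSum q E (insert x A) (m + 1)
        ≤ #E * (1 - (1 - q) * ((m + 1 : ℕ) : ℝ) / #E) * interPowSum q E A (m + 1) := by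
          convert hstep using 2
          field_simp
      _ ≤ #E * (1 - (1 - q) * ((m + 1 : ℕ) : ℝ) / #E) *
            ((#E).choose (m + 1) * (1 - (1 - q) * ((m + 1 : ℕ) : ℝ) / #E) ^ #A) := by
          gcongr
          exact ih hAE
      _ = _ := by ring

lemma card_mul_sum_card_inter_powersetCard (hA : A ⊆ E) (m : ℕ) :
    #E * ∑ S ∈ E.powersetCard m, #(S ∩ A) = m * #A * (#E).choose m := by
  obtain _ | m := m
  · simp
  have hcount : ∀ x ∈ A, #((E.powersetCard (m + 1)).filter (x ∈ ·)) = (#E - 1).choose m := by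
    intro x hx
    simpa using card_filter_powersetCard_subset {x} E (m + 1) (by simpa using hA hx) (by simp)
  simp_rw [inter_comm _ A]
  rw [sum_card_inter hcount]
  cases he : #E with
  | zero => simp
  | succ e =>
    rw [Nat.add_sub_cancel, mul_left_comm, Nat.add_one_mul_choose_eq]
    ring

lemma sum_card_inter_powersetCard (hA : A ⊆ E) (m : ℕ) :
    ∑ S ∈ E.powersetCard m, (#(S ∩ A) : ℝ) = (#E).choose m * (m * #A / #E) := by
  rcases (Nat.zero_le #E).eq_or_lt with hE | hE
  · have : A = ∅ := subset_empty.1 (card_eq_zero.1 hE.symm ▸ hA)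
    simp [this]
  have h : (#E : ℝ) * ∑ S ∈ E.powersetCard m, (#(S ∩ A) : ℝ) = m * #A * (#E).choose m := by
    exact_mod_cast card_mul_sum_card_inter_powersetCard hA m
  field_simp
  linarith

lemma le_sum_min_card_inter (hA : A ⊆ E) (hm : m ≤ #E) {r : ℕ} (hr : 1 ≤ r) :
    (1 - (exp 1)⁻¹) * ((#E).choose m * min (m * #A / #E : ℝ) r) ≤
      ∑ S ∈ E.powersetCard m, min (#(S ∩ A) : ℝ) r := by
  have hr0 : (0 : ℝ) < r := by exact_mod_cast hr
  set x : ℝ := (r : ℝ)⁻¹ * m / #E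
  have hx1 : x ≤ 1 := by
    rcases (Nat.zero_le #E).eq_or_lt with hE | hE
    · simp [x, ← hE]
    have : (m : ℝ) ≤ #E := by exact_mod_cast hm
    rw [div_le_one (by exact_mod_cast hE)]
    nlinarith [inv_le_one_of_one_le₀ (show (1 : ℝ) ≤ r by exact_mod_cast hr)]
  have hq0 : 0 ≤ 1 - (r : ℝ)⁻¹ := sub_nonneg.2 (inv_le_one_of_one_le₀ (by exact_mod_cast hr))
  have hg := interPowSum_le hq0 (by simp) hm hA
  rw [sub_sub_cancel] at hg
  have hexp : (1 - x) ^ #A ≤ exp (-(m * #A / #E / r)) := by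
    calc (1 - x) ^ #A ≤ exp (-x) ^ #A :=
          pow_le_pow_left₀ (sub_nonneg.2 hx1) (one_sub_le_exp_neg x) _
      _ = exp (-(m * #A / #E / r)) := by
          rw [← exp_nat_mul]
          congr 1
          simp only [x]
          ring
  calc (1 - (exp 1)⁻¹) * ((#E).choose m * min (m * #A / #E : ℝ) r)
      ≤ (#E).choose m * (r * (1 - exp (-(m * #A / #E / r)))) := by
        rw [mul_left_comm]
        exact mul_le_mul_of_nonneg_left (one_sub_inv_exp_mul_min_le (by positivity) hr0)
          (Nat.cast_nonneg _)
    _ ≤ r * ((#E).choose m - interPowSum (1 - (r : ℝ)⁻¹) E A m) := by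
        have := mul_le_mul_of_nonneg_left
          (hg.trans (mul_le_mul_of_nonneg_left hexp (Nat.cast_nonneg _))) hr0.le
        linarith
    _ = ∑ S ∈ E.powersetCard m, (r : ℝ) * (1 - (1 - (r : ℝ)⁻¹) ^ #(S ∩ A)) := by
        simp only [interPowSum, mul_sub, mul_one, sum_sub_distrib, sum_const, card_powersetCard,
          nsmul_eq_mul, mul_sum]
        ring
    _ ≤ ∑ S ∈ E.powersetCard m, min (#(S ∩ A) : ℝ) r :=
        sum_le_sum fun S _ => mul_one_sub_pow_le_min hr _

end RandomSubset

lemma exists_forall_iff_lt_of_downwardClosed {P : ℕ → Prop} [DecidablePred P] {k : ℕ}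
    (hP : ∀ j j', j ≤ j' → j' < k → P j' → P j) : ∃ i ≤ k, ∀ j < k, (P j ↔ j < i) := by
  have hex : ∃ i, k ≤ i ∨ ¬ P i := ⟨k, Or.inl le_rfl⟩
  refine ⟨Nat.find hex, Nat.find_min' hex (Or.inl le_rfl), fun j hj =>
    ⟨fun hPj => ?_, fun hji => ?_⟩⟩
  · by_contra! hij
    exact (Nat.find_spec hex).elim (fun h => by omega) (· (hP _ j hij hj hPj))
  · exact not_or.1 (Nat.find_min hex hji) |>.2 |> not_not.1

lemma chain_subset {α : Type*} {F : ℕ → Finset α} {k : ℕ}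
    (hchain : ∀ i < k, F i ⊆ F (i + 1)) {i j : ℕ} (hij : i ≤ j) (hjk : j ≤ k) :
    F i ⊆ F j := by
  induction j, hij using Nat.le_induction with
  | base => exact subset_rfl
  | succ j hij ih => exact (ih (by omega)).trans (hchain j (by omega))

structure FinMatroid.IsDensityChain {α : Type*} [DecidableEq α] (M : FinMatroid α)
    (F : ℕ → Finset α) (k : ℕ) (lam : ℕ → ℝ) : Prop where
  bot : F 0 = ∅
  top : F k = M.E
  mono : ∀ i < k, F i ⊆ F (i + 1)
  r_lt : ∀ i < k, M.r (F i) < M.r (F (i + 1))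
  density : ∀ i < k, lam (i + 1) =
    (#(F (i + 1) \ F i) : ℝ) / ((M.r (F (i + 1)) : ℝ) - (M.r (F i) : ℝ))
  density_lt : ∀ i, 1 ≤ i → i < k → lam (i + 1) < lam i

section Chain

variable {α : Type*} [DecidableEq α] {M : FinMatroid α} {F : ℕ → Finset α} {k : ℕ}

lemma pairwiseDisjoint_chain_sdiff (hchain : ∀ i < k, F i ⊆ F (i + 1)) :
    (range k : Set ℕ).PairwiseDisjoint fun j => F (j + 1) \ F j := by
  have key : ∀ i j, i < j → j < k → Disjoint (F (i + 1) \ F i) (F (j + 1) \ F j) :=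
    fun i j hij hjk =>
      disjoint_sdiff.mono_left (sdiff_subset.trans (chain_subset hchain hij hjk.le))
  intro i hi j hj hij
  simp only [coe_range, Set.mem_Iio] at hi hj
  rcases lt_or_gt_of_ne hij with h | h
  · exact key i j h hj
  · exact (key j i h hi).symm

lemma card_sdiff_eq_sum_Ico (hchain : ∀ i < k, F i ⊆ F (i + 1)) {S : Finset α} (hS : S ⊆ F k)
    {i : ℕ} (hik : i ≤ k) :
    (#(S \ F i) : ℝ) = ∑ j ∈ Ico i k, (#(S ∩ (F (j + 1) \ F j)) : ℝ) := by
  have hblock : ∀ j ∈ Ico i k,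
      (#(S ∩ (F (j + 1) \ F j)) : ℝ) = #(S ∩ F (j + 1)) - #(S ∩ F j) := by
    intro j hj
    have hsub : F j ⊆ F (j + 1) := hchain j (mem_Ico.1 hj).2
    have hinter : S ∩ F j = S ∩ F (j + 1) ∩ F j := by rw [inter_assoc, inter_eq_right.2 hsub]
    rw [eq_sub_iff_add_eq, ← inter_sdiff_assoc, ← Nat.cast_add, hinter, card_sdiff_add_card_inter]
  rw [sum_congr rfl hblock, sum_Ico_sub (fun j => (#(S ∩ F j) : ℝ)) hik, inter_eq_left.2 hS,
    eq_sub_iff_add_eq, ← Nat.cast_add, card_sdiff_add_card_inter]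

lemma r_le_sum_range_add_sum_Ico (hchain : ∀ i < k, F i ⊆ F (i + 1)) (hF0 : F 0 = ∅)
    {S : Finset α} (hS : S ⊆ F k) {i : ℕ} (hik : i ≤ k) :
    (M.r S : ℝ) ≤ ∑ j ∈ range i, ((M.r (F (j + 1)) : ℝ) - M.r (F j)) +
      ∑ j ∈ Ico i k, (#(S ∩ (F (j + 1) \ F j)) : ℝ) := by
  rw [sum_range_sub (fun j => (M.r (F j) : ℝ)), hF0, M.r_empty, Nat.cast_zero, sub_zero,
    ← card_sdiff_eq_sum_Ico hchain hS hik]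
  exact_mod_cast M.r_le_r_add_card_sdiff S (F i)

namespace FinMatroid.IsDensityChain

variable {lam : ℕ → ℝ}

lemma sdiff_subset_ground (hF : M.IsDensityChain F k lam) {j : ℕ} (hj : j < k) :
    F (j + 1) \ F j ⊆ M.E :=
  hF.top ▸ sdiff_subset.trans (chain_subset hF.mono hj le_rfl)

lemma cast_r_sub_r (hF : M.IsDensityChain F k lam) {j : ℕ} (hj : j < k) :
    ((M.r (F (j + 1)) - M.r (F j) : ℕ) : ℝ) = (M.r (F (j + 1)) : ℝ) - M.r (F j) :=
  Nat.cast_sub (hF.r_lt j hj).le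

lemma cast_r_sub_r_pos (hF : M.IsDensityChain F k lam) {j : ℕ} (hj : j < k) :
    (0 : ℝ) < ((M.r (F (j + 1)) - M.r (F j) : ℕ) : ℝ) := by
  exact_mod_cast Nat.sub_pos_of_lt (hF.r_lt j hj)

lemma exists_forall_r_sub_r_le_iff_lt (hF : M.IsDensityChain F k lam) {a : ℝ} (ha : 0 ≤ a) :
    ∃ i ≤ k, ∀ j < k,
      (((M.r (F (j + 1)) - M.r (F j) : ℕ) : ℝ) ≤ a * #(F (j + 1) \ F j) ↔ j < i) := by
  have hlam_anti : AntitoneOn lam (Set.Icc 1 k) :=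
    antitoneOn_of_succ_le Set.ordConnected_Icc fun j _ hj hj' =>
      (hF.density_lt j hj.1 (by simp only [Order.succ_eq_add_one, Set.mem_Icc] at hj'; omega)).le
  refine exists_forall_iff_lt_of_downwardClosed fun j j' hjj' hj'k hP => ?_
  have hjk : j < k := by omega
  have hl := hlam_anti ⟨by omega, by omega⟩ ⟨by omega, by omega⟩ (by omega : j + 1 ≤ j' + 1)
  rw [hF.density j' hj'k, hF.density j hjk, ← hF.cast_r_sub_r hj'k, ← hF.cast_r_sub_r hjk,
    div_le_div_iff₀ (hF.cast_r_sub_r_pos hj'k) (hF.cast_r_sub_r_pos hjk)] at hl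
  nlinarith [hF.cast_r_sub_r_pos hjk, hF.cast_r_sub_r_pos hj'k, mul_le_mul_of_nonneg_left hl ha]

lemma sum_r_powersetCard_le (hF : M.IsDensityChain F k lam) (m : ℕ) :
    ∑ S ∈ M.E.powersetCard m, (M.r S : ℝ) ≤
      (#M.E).choose m * ∑ j ∈ range k,
        min (m * #(F (j + 1) \ F j) / #M.E : ℝ) ((M.r (F (j + 1)) - M.r (F j) : ℕ) : ℝ) := by
  set C : ℝ := ((#M.E).choose m : ℝ)
  set a : ℝ := m / #M.E
  set c : ℕ → ℝ := fun j => #(F (j + 1) \ F j)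
  set R : ℕ → ℝ := fun j => ((M.r (F (j + 1)) - M.r (F j) : ℕ) : ℝ)
  -- The blocks `j < i` are those that a random `m`-set saturates in expectation.
  obtain ⟨i, hik, hi⟩ := hF.exists_forall_r_sub_r_le_iff_lt (a := a) (by positivity)
  have hmin : ∀ j ∈ range k, min (m * c j / #M.E) (R j) = if j < i then R j else a * c j := by
    intro j hj
    rw [mul_div_right_comm]
    split_ifs with hji
    · exact min_eq_right ((hi j (mem_range.1 hj)).2 hji)
    · exact min_eq_left (le_of_not_ge (mt (hi j (mem_range.1 hj)).1 hji))
  have hblock : ∀ j ∈ Ico i k, ∑ S ∈ M.E.powersetCard m, (#(S ∩ (F (j + 1) \ F j)) : ℝ) =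
      C * (a * c j) := by
    intro j hj
    rw [sum_card_inter_powersetCard (hF.sdiff_subset_ground (mem_Ico.1 hj).2) m,
      mul_div_right_comm]
  calc ∑ S ∈ M.E.powersetCard m, (M.r S : ℝ)
      ≤ ∑ S ∈ M.E.powersetCard m,
          (∑ j ∈ range i, R j + ∑ j ∈ Ico i k, (#(S ∩ (F (j + 1) \ F j)) : ℝ)) := by
        refine sum_le_sum fun S hS => ?_
        rw [sum_congr rfl fun j hj => hF.cast_r_sub_r (by simp at hj; omega)]
        exact r_le_sum_range_add_sum_Ico hF.mono hF.bot (hF.top ▸ (mem_powersetCard.1 hS).1) hik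
    _ = C * ∑ j ∈ range i, R j + ∑ j ∈ Ico i k, C * (a * c j) := by
        rw [sum_add_distrib, sum_const, card_powersetCard, nsmul_eq_mul, sum_comm,
          sum_congr rfl hblock]
    _ = C * ∑ j ∈ range k, min (m * c j / #M.E) (R j) := by
        rw [sum_congr rfl hmin, ← sum_range_add_sum_Ico _ hik, mul_add, ← mul_sum]
        congr 2
        · exact sum_congr rfl fun j hj => by rw [if_pos (mem_range.1 hj)]
        · exact sum_congr rfl fun j hj => by rw [if_neg (not_lt.2 (mem_Ico.1 hj).1)]

lemma one_sub_inv_exp_mul_sum_r_le_sum_partitionRank (hF : M.IsDensityChain F k lam) {m : ℕ}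
    (hm : m ≤ #M.E) :
    (1 - (exp 1)⁻¹) * ∑ S ∈ M.E.powersetCard m, (M.r S : ℝ) ≤
      ∑ S ∈ M.E.powersetCard m, (partitionRank (fun j => F (j + 1) \ F j)
        (fun j => M.r (F (j + 1)) - M.r (F j)) k S : ℝ) := by
  calc (1 - (exp 1)⁻¹) * ∑ S ∈ M.E.powersetCard m, (M.r S : ℝ)
      ≤ ∑ j ∈ range k, (1 - (exp 1)⁻¹) * ((#M.E).choose m *
          min (m * #(F (j + 1) \ F j) / #M.E : ℝ) ((M.r (F (j + 1)) - M.r (F j) : ℕ) : ℝ)) := by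
        rw [← mul_sum, ← mul_sum]
        exact mul_le_mul_of_nonneg_left (hF.sum_r_powersetCard_le m) one_sub_inv_exp_one_nonneg
    _ ≤ ∑ j ∈ range k, ∑ S ∈ M.E.powersetCard m,
          min (#(S ∩ (F (j + 1) \ F j)) : ℝ) ((M.r (F (j + 1)) - M.r (F j) : ℕ) : ℝ) := by
        refine sum_le_sum fun j hj => ?_
        rw [mem_range] at hj
        exact le_sum_min_card_inter (hF.sdiff_subset_ground hj) hm
          (Nat.sub_pos_of_lt (hF.r_lt j hj))
    _ = _ := by
        rw [sum_comm]
        simp only [partitionRank, Nat.cast_sum, Nat.cast_min]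

end FinMatroid.IsDensityChain

end Chain

section Permutations

lemma exists_perm_image_eq {β : Type*} [DecidableEq β] {m : ℕ} {S T : Finset β} (hS : #S = m)
    (hT : #T = m) :
    ∃ g : Equiv.Perm β, T = S.image g := by
  have := Set.powersetCard.isPretransitive (α := β) (n := m)
  obtain ⟨g, hg⟩ := MulAction.exists_smul_eq (Equiv.Perm β)
    (⟨S, hS⟩ : Set.powersetCard β m) ⟨T, hT⟩
  have h := congrArg Subtype.val hg
  rw [Set.powersetCard.coe_smul, smul_finset_def] at h
  exact ⟨g, h.symm⟩

variable {β : Type*} [Fintype β] [DecidableEq β] {n : ℕ}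

lemma card_bijective_prefixImage_eq_image (g : Equiv.Perm β) (m : ℕ) (S : Finset β) :
    #((univ.filter fun σ : Fin n → β => Function.Bijective σ).filter
        (prefixImage · m = S.image g)) =
      #((univ.filter fun σ : Fin n → β => Function.Bijective σ).filter (prefixImage · m = S)) := by
  refine (card_equiv ((Equiv.refl (Fin n)).arrowCongr g) fun σ => ?_).symm
  simp only [mem_filter, mem_univ, true_and]
  change _ ↔ Function.Bijective (g ∘ σ) ∧ prefixImage (g ∘ σ) m = S.image g
  rw [Equiv.comp_bijective, prefixImage, prefixImage, ← image_image,
    (image_injective g.injective).eq_iff]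

lemma exists_sum_bijective_prefixImage_eq {m : ℕ} (hm : m ≤ n) :
    ∃ c : ℝ, 0 ≤ c ∧ ∀ G : Finset β → ℝ,
      ∑ σ ∈ univ.filter (fun σ : Fin n → β => Function.Bijective σ), G (prefixImage σ m) =
        c * ∑ S ∈ univ.powersetCard m, G S := by
  set Bij := univ.filter fun σ : Fin n → β => Function.Bijective σ
  obtain hBij | ⟨σ₀, hσ₀⟩ := Bij.eq_empty_or_nonempty
  · exact ⟨0, le_rfl, fun G => by simp [hBij]⟩
  have hmaps : ∀ σ ∈ Bij, prefixImage σ m ∈ univ.powersetCard m := fun σ hσ =>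
    mem_powersetCard_univ.2 (card_prefixImage (mem_filter.1 hσ).2.injective hm)
  refine ⟨#(Bij.filter (prefixImage · m = prefixImage σ₀ m)), by positivity, fun G => ?_⟩
  rw [← sum_fiberwise_of_maps_to hmaps, mul_sum]
  refine sum_congr rfl fun S hS => ?_
  obtain ⟨g, hg⟩ :=
    exists_perm_image_eq (mem_powersetCard_univ.1 hS) (mem_powersetCard_univ.1 (hmaps σ₀ hσ₀))
  rw [sum_congr rfl fun σ hσ => congrArg G (mem_filter.1 hσ).2, sum_const, nsmul_eq_mul, hg,
    card_bijective_prefixImage_eq_image]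

lemma exists_sum_bijective_prefixImage_val_eq {α : Type*} [DecidableEq α] {E : Finset α}
    {m : ℕ} (hm : m ≤ n) :
    ∃ c : ℝ, 0 ≤ c ∧ ∀ G : Finset α → ℝ,
      ∑ σ ∈ univ.filter (fun σ : Fin n → {a // a ∈ E} => Function.Bijective σ),
          G (prefixImage (fun j => (σ j : α)) m) =
        c * ∑ S ∈ E.powersetCard m, G S := by
  obtain ⟨c, hc, h⟩ := exists_sum_bijective_prefixImage_eq (β := {a // a ∈ E}) hm
  refine ⟨c, hc, fun G => ?_⟩
  have hval : ∀ σ : Fin n → {a // a ∈ E},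
      prefixImage (fun j => (σ j : α)) m =
        (prefixImage σ m).map (Function.Embedding.subtype _) := by
    intro σ
    simp [prefixImage, map_eq_image, image_image, Function.comp_def]
  conv_rhs => rw [← attach_map_val (s := E), powersetCard_map, sum_map, ← univ_eq_attach]
  simp only [hval, RelEmbedding.coe_toEmbedding, mapEmbedding_apply]
  exact h fun S => G (S.map (Function.Embedding.subtype _))

end Permutations

lemma FinMatroid.IsDensityChain.one_sub_inv_exp_mul_sum_bijective_r_le {α : Type*}
    [DecidableEq α] {M : FinMatroid α} {F : ℕ → Finset α} {k : ℕ} {lam : ℕ → ℝ}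
    (hF : M.IsDensityChain F k lam) {n m : ℕ} (hcard : #M.E = n) (hm : m ≤ n) :
    (1 - (exp 1)⁻¹) *
        ∑ σ ∈ univ.filter (fun σ : Fin n → {a // a ∈ M.E} => Function.Bijective σ),
          (M.r (prefixImage (fun j => (σ j : α)) m) : ℝ) ≤
      ∑ σ ∈ univ.filter (fun σ : Fin n → {a // a ∈ M.E} => Function.Bijective σ),
        (partitionRank (fun j => F (j + 1) \ F j) (fun j => M.r (F (j + 1)) - M.r (F j)) k
          (prefixImage (fun j => (σ j : α)) m) : ℝ) := by
  obtain ⟨c, hc, hG⟩ := exists_sum_bijective_prefixImage_val_eq (E := M.E) hm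
  rw [hG fun S => (M.r S : ℝ), hG fun S => (partitionRank _ _ k S : ℝ), mul_left_comm]
  exact mul_le_mul_of_nonneg_left
    (hF.one_sub_inv_exp_mul_sum_r_le_sum_partitionRank (hcard ▸ hm)) hc

theorem stmt9_general {α : Type*} [DecidableEq α] (M : FinMatroid α)
    (n : ℕ) (hcard : M.E.card = n)
    (k : ℕ) (F : ℕ → Finset α)
    (hF0 : F 0 = ∅) (hFk : F k = M.E)
    (hchain : ∀ i < k, F i ⊂ F (i + 1))
    (hri : ∀ i < k, M.r (F i) < M.r (F (i + 1)))
    (lam : ℕ → ℝ)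
    (hlam : ∀ i < k, lam (i + 1) =
      ((F (i + 1) \ F i).card : ℝ) / ((M.r (F (i + 1)) : ℝ) - (M.r (F i) : ℝ)))
    (hdec : ∀ i, 1 ≤ i → i < k → lam (i + 1) < lam i)
    (w : ℕ → ℝ) (hw : ∀ i j, i ≤ j → j < n → w j ≤ w i) (hw0 : ∀ j < n, 0 ≤ w j)
    (OPTP OPTM : (Fin n → {a // a ∈ M.E}) → Finset α)
    (hOPTP : ∀ σ : Fin n → {a // a ∈ M.E}, Function.Bijective σ →
      OPTP σ ⊆ M.E ∧
      (∀ i < k, ((OPTP σ) ∩ (F (i + 1) \ F i)).card ≤ M.r (F (i + 1)) - M.r (F i)) ∧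
      ∀ I ⊆ M.E,
        (∀ i < k, (I ∩ (F (i + 1) \ F i)).card ≤ M.r (F (i + 1)) - M.r (F i)) →
        ∑ jj ∈ Finset.univ.filter (fun jj : Fin n => ((σ jj : α) ∈ I)), w (jj : ℕ) ≤
          ∑ jj ∈ Finset.univ.filter (fun jj : Fin n => ((σ jj : α) ∈ OPTP σ)), w (jj : ℕ))
    (hOPTM : ∀ σ : Fin n → {a // a ∈ M.E}, Function.Bijective σ →
      OPTM σ ⊆ M.E ∧ M.r (OPTM σ) = (OPTM σ).card ∧
      ∀ I ⊆ M.E, M.r I = I.card →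
        ∑ jj ∈ Finset.univ.filter (fun jj : Fin n => ((σ jj : α) ∈ I)), w (jj : ℕ) ≤
          ∑ jj ∈ Finset.univ.filter (fun jj : Fin n => ((σ jj : α) ∈ OPTM σ)), w (jj : ℕ)) :
    (1 - (Real.exp 1)⁻¹) *
        ∑ σ ∈ Finset.univ.filter
            (fun σ : Fin n → {a // a ∈ M.E} => Function.Bijective σ),
          ∑ jj ∈ Finset.univ.filter (fun jj : Fin n => ((σ jj : α) ∈ OPTM σ)), w (jj : ℕ) ≤
      ∑ σ ∈ Finset.univ.filter
          (fun σ : Fin n → {a // a ∈ M.E} => Function.Bijective σ),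
        ∑ jj ∈ Finset.univ.filter (fun jj : Fin n => ((σ jj : α) ∈ OPTP σ)), w (jj : ℕ) := by
  have hF : M.IsDensityChain F k lam :=
    ⟨hF0, hFk, fun i hi => (hchain i hi).subset, hri, hlam, hdec⟩
  have hd : ∀ t ∈ range n, 0 ≤ weightDrop n w t := fun t _ => weightDrop_nonneg hw hw0 t
  set Bij := univ.filter fun σ : Fin n → {a // a ∈ M.E} => Function.Bijective σ
  have hinj : ∀ σ ∈ Bij, Function.Injective fun j => (σ j : α) :=
    fun σ hσ => Subtype.val_injective.comp (mem_filter.1 hσ).2.injective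
  calc _ ≤ (1 - (exp 1)⁻¹) * ∑ σ ∈ Bij,
          ∑ t ∈ range n, weightDrop n w t * M.r (prefixImage (fun j => (σ j : α)) (t + 1)) :=
        mul_le_mul_of_nonneg_left (sum_le_sum fun σ hσ => M.sum_weight_le_of_indep (hinj σ hσ) hd
          (hOPTM σ (mem_filter.1 hσ).2).2.1) one_sub_inv_exp_one_nonneg
    _ ≤ ∑ σ ∈ Bij, ∑ t ∈ range n, weightDrop n w t *
          partitionRank (fun j => F (j + 1) \ F j) (fun j => M.r (F (j + 1)) - M.r (F j)) k
            (prefixImage (fun j => (σ j : α)) (t + 1)) :=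
        mul_sum_sum_mul_le_of_forall hd fun t ht =>
          hF.one_sub_inv_exp_mul_sum_bijective_r_le hcard (mem_range.1 ht)
    _ ≤ _ := sum_le_sum fun σ hσ => by
        obtain ⟨I, hIv, hIcap, hI⟩ := exists_sum_weight_eq_sum_partitionRank (w := w) (hinj σ hσ)
          (pairwiseDisjoint_chain_sdiff hF.mono) fun j => M.r (F (j + 1)) - M.r (F j)
        rw [← hI]
        exact (hOPTP σ (mem_filter.1 hσ).2).2.2 I
          (hIv.trans (image_subset_iff.2 fun j _ => (σ j).2)) hIcap

/-- Setup as for the principal sequence: a chain `∅ = F_0 ⊊ ⋯ ⊊ F_k = E` with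
`E_i = F_i \ F_{i−1}`, `r_i = r(F_i) − r(F_{i−1}) ≥ 1` and strictly decreasing
densities `λ_i ≥ 1`, plus weights `w 0 ≥ ⋯ ≥ w (n−1) ≥ 0`. Averaging over all
bijections `σ : {0,…,n−1} → E` (element `σ j` gets weight `w j`), the maximum
weight of a set `I` with `|I ∩ E_i| ≤ r_i` for all `i` is at least `(1 − 1/e)`
times the maximum weight of an independent set of `M`. The maxima are given by
choice functions `OPTP`, `OPTM` assumed optimal for each bijection. -/
theorem stmt9 {α : Type*} [DecidableEq α] (M : FinMatroid α) (hloop : M.Loopless)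
    (n : ℕ) (hn : 1 ≤ n) (hcard : M.E.card = n)
    (k : ℕ) (hk : 1 ≤ k) (F : ℕ → Finset α)
    (hF0 : F 0 = ∅) (hFk : F k = M.E)
    (hchain : ∀ i < k, F i ⊂ F (i + 1))
    (hri : ∀ i < k, M.r (F i) < M.r (F (i + 1)))
    (lam : ℕ → ℝ)
    (hlam : ∀ i < k, lam (i + 1) =
      ((F (i + 1) \ F i).card : ℝ) / ((M.r (F (i + 1)) : ℝ) - (M.r (F i) : ℝ)))
    (hdec : ∀ i, 1 ≤ i → i < k → lam (i + 1) < lam i)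
    (hlast : 1 ≤ lam k)
    (w : ℕ → ℝ) (hw : ∀ i j, i ≤ j → j < n → w j ≤ w i) (hw0 : ∀ j < n, 0 ≤ w j)
    (OPTP OPTM : (Fin n → {a // a ∈ M.E}) → Finset α)
    (hOPTP : ∀ σ : Fin n → {a // a ∈ M.E}, Function.Bijective σ →
      OPTP σ ⊆ M.E ∧
      (∀ i < k, ((OPTP σ) ∩ (F (i + 1) \ F i)).card ≤ M.r (F (i + 1)) - M.r (F i)) ∧
      ∀ I ⊆ M.E,
        (∀ i < k, (I ∩ (F (i + 1) \ F i)).card ≤ M.r (F (i + 1)) - M.r (F i)) →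
        ∑ jj ∈ Finset.univ.filter (fun jj : Fin n => ((σ jj : α) ∈ I)), w (jj : ℕ) ≤
          ∑ jj ∈ Finset.univ.filter (fun jj : Fin n => ((σ jj : α) ∈ OPTP σ)), w (jj : ℕ))
    (hOPTM : ∀ σ : Fin n → {a // a ∈ M.E}, Function.Bijective σ →
      OPTM σ ⊆ M.E ∧ M.r (OPTM σ) = (OPTM σ).card ∧
      ∀ I ⊆ M.E, M.r I = I.card →
        ∑ jj ∈ Finset.univ.filter (fun jj : Fin n => ((σ jj : α) ∈ I)), w (jj : ℕ) ≤
          ∑ jj ∈ Finset.univ.filter (fun jj : Fin n => ((σ jj : α) ∈ OPTM σ)), w (jj : ℕ)) :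
    (1 - (Real.exp 1)⁻¹) *
        ∑ σ ∈ Finset.univ.filter
            (fun σ : Fin n → {a // a ∈ M.E} => Function.Bijective σ),
          ∑ jj ∈ Finset.univ.filter (fun jj : Fin n => ((σ jj : α) ∈ OPTM σ)), w (jj : ℕ) ≤
      ∑ σ ∈ Finset.univ.filter
          (fun σ : Fin n → {a // a ∈ M.E} => Function.Bijective σ),
        ∑ jj ∈ Finset.univ.filter (fun jj : Fin n => ((σ jj : α) ∈ OPTP σ)), w (jj : ℕ) :=
  stmt9_general M n hcard k F hF0 hFk hchain hri lam hlam hdec w hw hw0 OPTP OPTM hOPTP hOPTM
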